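/- Let G and B be Hermitian n×n complex matrices with G² = I, let ψ ∈ ℂⁿ be a unit vector, and define U(θ) = exp(−(iθ/2)·G) and f(θ) = ⟨ψ, U(θ)* B U(θ) ψ⟩ (which is real since B is Hermitian and U(θ) is unitary). Then f is differentiable on ℝ and for every θ, f′(θ) = (1/2)·(f(θ + π/2) − f(θ − π/2)). -/

import Mathlib

open Real Matrix

/-- exp of `w • G` for `G² = 1`. -/
lemma exp_smul_sq_one {n : ℕ} (G : Matrix (Fin n) (Fin n) ℂ) (hG2 : G * G = 1) (θ : ℝ) :
    NormedSpace.exp ((-(θ / 2 : ℂ) * Complex.I) • G) =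
      (Real.cos (θ / 2) : ℂ) • (1 : Matrix (Fin n) (Fin n) ℂ) +
        (-(Real.sin (θ / 2) : ℂ) * Complex.I) • G := by
  letI : SeminormedRing (Matrix (Fin n) (Fin n) ℂ) := Matrix.linftyOpSemiNormedRing
  letI : NormedRing (Matrix (Fin n) (Fin n) ℂ) := Matrix.linftyOpNormedRing
  letI : NormedAlgebra ℂ (Matrix (Fin n) (Fin n) ℂ) := Matrix.linftyOpNormedAlgebra
  set w : ℂ := -(θ / 2 : ℂ) * Complex.I with hw
  have hGsq : G ^ 2 = 1 := by rw [pow_two, hG2]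
  have hGe : ∀ k : ℕ, G ^ (2 * k) = 1 := by
    intro k; rw [pow_mul, hGsq, one_pow]
  have hGo : ∀ k : ℕ, G ^ (2 * k + 1) = G := by
    intro k; rw [pow_succ, hGe, one_mul]
  have hsum : HasSum (fun k : ℕ => (w ^ k / (Nat.factorial k : ℂ)) • G ^ k)
      (NormedSpace.exp (w • G)) := by
    have h := NormedSpace.exp_series_hasSum_exp' (𝕂 := ℂ) (w • G)
    simp_rw [smul_pow, smul_smul, ← div_eq_inv_mul] at h
    exact h
  have hcos : HasSum
      (fun k : ℕ => (w ^ (2 * k) / (Nat.factorial (2 * k) : ℂ)) • (1 : Matrix (Fin n) (Fin n) ℂ))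
      ((Real.cos (θ / 2) : ℂ) • (1 : Matrix (Fin n) (Fin n) ℂ)) := by
    have h := (Complex.hasSum_cos' (-(θ / 2 : ℂ))).smul_const (1 : Matrix (Fin n) (Fin n) ℂ)
    have h1 : Complex.cos (-(θ / 2 : ℂ)) = (Real.cos (θ / 2) : ℂ) := by
      rw [Complex.cos_neg]; norm_cast
    rw [h1, ← hw] at h
    exact h
  have hsin : HasSum
      (fun k : ℕ => (w ^ (2 * k + 1) / (Nat.factorial (2 * k + 1) : ℂ)) • G)
      ((-(Real.sin (θ / 2) : ℂ) * Complex.I) • G) := by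
    have h := ((Complex.hasSum_sin' (-(θ / 2 : ℂ))).mul_right Complex.I).smul_const G
    have h1 : Complex.sin (-(θ / 2 : ℂ)) * Complex.I
        = -(Real.sin (θ / 2) : ℂ) * Complex.I := by
      rw [Complex.sin_neg]; norm_cast
    rw [h1, ← hw] at h
    simp_rw [div_mul_cancel₀ _ Complex.I_ne_zero] at h
    exact h
  have hE : HasSum (fun k : ℕ => (w ^ k / (Nat.factorial k : ℂ)) • G ^ k)
      ((Real.cos (θ / 2) : ℂ) • (1 : Matrix (Fin n) (Fin n) ℂ) +
        (-(Real.sin (θ / 2) : ℂ) * Complex.I) • G) := by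
    refine HasSum.even_add_odd ?_ ?_
    · simpa only [hGe] using hcos
    · simpa only [hGo] using hsin
  exact hsum.unique hE

/-- Parameter-shift rule: for Hermitian `G, B` with `G² = 1`, a unit vector `ψ`,
`U θ = exp(-(iθ/2) G)` and the (real) expectation value
`f θ = ⟨ψ, U(θ)* B U(θ) ψ⟩`, the function `f` is differentiable and
`f'(θ) = (1/2)(f(θ + π/2) - f(θ - π/2))`. -/
theorem parameter_shift_rule (n : ℕ)
    (G B : Matrix (Fin n) (Fin n) ℂ)
    (hG : G.IsHermitian) (hB : B.IsHermitian) (hG2 : G * G = 1)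
    (ψ : EuclideanSpace ℂ (Fin n)) (hψ : ‖ψ‖ = 1)
    (U : ℝ → Matrix (Fin n) (Fin n) ℂ)
    (hU : ∀ θ : ℝ, U θ = NormedSpace.exp ((-(θ / 2 : ℂ) * Complex.I) • G))
    (f : ℝ → ℝ)
    (hf : ∀ θ : ℝ, (f θ : ℂ) = star (ψ : Fin n → ℂ) ⬝ᵥ ((U θ)ᴴ * B * U θ).mulVec ψ) :
    ∀ θ : ℝ, HasDerivAt f ((1 / 2) * (f (θ + π / 2) - f (θ - π / 2))) θ := by
  -- explicit formula for U
  have hUθ : ∀ θ : ℝ, U θ = (Real.cos (θ / 2) : ℂ) • (1 : Matrix (Fin n) (Fin n) ℂ) +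
      (-(Real.sin (θ / 2) : ℂ) * Complex.I) • G := by
    intro θ; rw [hU θ, exp_smul_sq_one G hG2]
  -- constants
  set a : ℂ := star (ψ : Fin n → ℂ) ⬝ᵥ B.mulVec ψ with ha
  set b : ℂ := star (ψ : Fin n → ℂ) ⬝ᵥ (G * B * G).mulVec ψ with hb
  set d : ℂ := star (ψ : Fin n → ℂ) ⬝ᵥ ((G * B - B * G).mulVec ψ) with hd
  -- the complex expectation value
  have hfc : ∀ θ : ℝ, (f θ : ℂ) =
      ((Real.cos (θ / 2) : ℂ) ^ 2) * a + ((Real.sin (θ / 2) : ℂ) ^ 2) * b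
        + ((Real.cos (θ / 2) : ℂ) * (Real.sin (θ / 2) : ℂ)) * (Complex.I * d) := by
    intro θ
    rw [hf θ, hUθ θ]
    set c : ℂ := (Real.cos (θ / 2) : ℂ)
    set s : ℂ := (Real.sin (θ / 2) : ℂ)
    have hcstar : (c • (1 : Matrix (Fin n) (Fin n) ℂ) + (-s * Complex.I) • G)ᴴ
        = c • (1 : Matrix (Fin n) (Fin n) ℂ) + (s * Complex.I) • G := by
      have h1 : star c = c := Complex.conj_ofReal _
      have h2 : star (-s * Complex.I) = s * Complex.I := by
        have hs : star s = s := Complex.conj_ofReal _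
        rw [star_mul', star_neg, hs, Complex.star_def, Complex.conj_I]
        ring
      rw [conjTranspose_add, conjTranspose_smul, conjTranspose_smul, conjTranspose_one, hG.eq,
        h1, h2]
    rw [hcstar]
    have hexp : (c • (1 : Matrix (Fin n) (Fin n) ℂ) + (s * Complex.I) • G) * B *
        (c • (1 : Matrix (Fin n) (Fin n) ℂ) + (-s * Complex.I) • G)
        = (c * c) • B + (c * (-s * Complex.I)) • (B * G)
          + ((s * Complex.I) * c) • (G * B) + ((s * Complex.I) * (-s * Complex.I)) • (G * B * G) := by
      simp only [Matrix.add_mul, Matrix.mul_add, Matrix.smul_mul, Matrix.mul_smul,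
        Matrix.one_mul, Matrix.mul_one]
      module
    rw [hexp]
    simp only [Matrix.add_mulVec, Matrix.smul_mulVec, dotProduct_add, dotProduct_smul,
      smul_eq_mul]
    have hsI : s * Complex.I * (-s * Complex.I) = s ^ 2 := by
      have : Complex.I * Complex.I = -1 := Complex.I_mul_I
      ring_nf
      rw [Complex.I_sq]
      ring
    have hd' : star (ψ : Fin n → ℂ) ⬝ᵥ (G * B).mulVec ψ
        - star (ψ : Fin n → ℂ) ⬝ᵥ (B * G).mulVec ψ = d := by
      rw [hd, Matrix.sub_mulVec, dotProduct_sub]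
    rw [hsI, ← hd']
    ring
  -- real form
  set ar : ℝ := a.re with har
  set br : ℝ := b.re with hbr
  set dr : ℝ := (Complex.I * d).re with hdr
  have hfr : ∀ θ : ℝ,
      f θ = Real.cos (θ / 2) ^ 2 * ar + Real.sin (θ / 2) ^ 2 * br
        + Real.cos (θ / 2) * Real.sin (θ / 2) * dr := by
    intro θ
    have h := congrArg Complex.re (hfc θ)
    simp only [← Complex.ofReal_pow, ← Complex.ofReal_mul, Complex.add_re,
      Complex.re_ofReal_mul, Complex.ofReal_re] at h
    exact h
  -- Fourier form
  set A : ℝ := (ar + br) / 2 with hA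
  set C : ℝ := (ar - br) / 2 with hC
  set S : ℝ := dr / 2 with hS
  have key : ∀ θ : ℝ, f θ = A + C * Real.cos θ + S * Real.sin θ := by
    intro θ
    rw [hfr θ, hA, hC, hS]
    have h1 : Real.cos θ = Real.cos (2 * (θ / 2)) := by ring_nf
    have h2 : Real.sin θ = Real.sin (2 * (θ / 2)) := by ring_nf
    rw [h1, h2, Real.cos_two_mul, Real.sin_two_mul]
    have h3 : Real.sin (θ / 2) ^ 2 = 1 - Real.cos (θ / 2) ^ 2 := by
      have := Real.sin_sq_add_cos_sq (θ / 2); linarith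
    rw [h3]; ring
  intro θ
  have hder : HasDerivAt (fun t : ℝ => A + C * Real.cos t + S * Real.sin t)
      (C * (-Real.sin θ) + S * Real.cos θ) θ := by
    have h1 : HasDerivAt (fun t : ℝ => A) (0 : ℝ) θ := hasDerivAt_const θ A
    have h2 := (Real.hasDerivAt_cos θ).const_mul C
    have h3 := (Real.hasDerivAt_sin θ).const_mul S
    exact ((h1.add h2).add h3).congr_deriv (by ring)
  have hfun : f = fun t : ℝ => A + C * Real.cos t + S * Real.sin t := funext key
  rw [hfun]
  convert hder using 1
  simp only [Real.cos_add, Real.sin_add, Real.cos_sub, Real.sin_sub,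
    Real.cos_pi_div_two, Real.sin_pi_div_two]
  ring
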